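/- Under the hypotheses E[R_P(f̂_m(D_k))] = α(m) + β(m)/k and E[R_P(f̂_m(D_k)) − R̂_k(f̂_m(D_k))] = 2β(m)/k for all k ≥ 1 (i.e., γ(m) = 2β(m)), the expectation of the cross-validation penalty E[R̂^{vc}(f̂_m; D_n; (E_j)) − R̂_n(f̂_m(D_n))] equals (β(m)/n)·(1 + n/n_e), i.e., cross-validation overpenalizes relative to the ideal expected penalty 2β(m)/n by the multiplicative factor (1/2)(1 + n/n_e) > 1. -/

import Mathlib

open MeasureTheory ProbabilityTheory Finset



section auxlemmas

variable {Z : Type*} [MeasurableSpace Z]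

lemma map_eval_pi' {ι : Type*} [Fintype ι] [DecidableEq ι] (P : Measure Z)
    [IsProbabilityMeasure P] (i : ι) :
    Measure.map (Function.eval i) (Measure.pi fun _ : ι => P) = P := by
  apply Measure.ext
  intro t ht
  rw [Measure.map_apply (measurable_pi_apply i) ht, Set.eval_preimage, Measure.pi_pi]
  rw [Finset.prod_eq_single i (fun b _ hb => by simp [Function.update_apply, hb])
    (by simp)]
  simp

lemma integrable_of_integrable_eval {P : Measure Z} [IsProbabilityMeasure P]
    {ι : Type*} [Fintype ι] [DecidableEq ι] {h : Z → ℝ} (hh : Measurable h) (i0 : ι)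
    (hy : Integrable (fun t : ι → Z => h (t i0)) (Measure.pi fun _ => P)) :
    Integrable h P := by
  have hmap := map_eval_pi' (ι := ι) P i0
  have hres : Integrable h (Measure.map (Function.eval i0) (Measure.pi fun _ : ι => P)) :=
    (integrable_map_measure hh.aestronglyMeasurable
      (measurable_pi_apply _).aemeasurable).mpr hy
  rwa [hmap] at hres

lemma aux_int_of_sum {P : Measure Z} [IsProbabilityMeasure P]
    {ι : Type*} [Fintype ι] [DecidableEq ι] (i0 : ι) {h : Z → ℝ} (hh : Measurable h)
    (hint : Integrable (fun y : ι → Z => ∑ i, h (y i)) (Measure.pi fun _ => P)) :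
    Integrable h P := by
  set p : ι → Prop := fun i => i = i0 with hp
  haveI : DecidablePred p := fun i => inferInstanceAs (Decidable (i = i0))
  haveI : Unique {i // p i} := ⟨⟨⟨i0, rfl⟩⟩, fun a => Subtype.ext a.2⟩
  set e := MeasurableEquiv.piEquivPiSubtypeProd (fun _ : ι => Z) p with he
  have mp := measurePreserving_piEquivPiSubtypeProd (fun _ : ι => P) p
  have h1 := ((mp.symm e).integrable_comp_emb e.symm.measurableEmbedding).mpr hint
  obtain ⟨y0, hy0⟩ := (h1.prod_left_ae).exists
  have key : (fun t : {i // p i} → Z => ((fun y : ι → Z => ∑ i, h (y i)) ∘ ⇑e.symm) (t, y0))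
      = fun t => h (t ⟨i0, rfl⟩)
        + ∑ i ∈ Finset.univ.erase i0, (if hi : p i then 0 else h (y0 ⟨i, hi⟩)) := by
    funext t
    show (∑ i, h (e.symm (t, y0) i)) = _
    rw [← Finset.add_sum_erase _ _ (Finset.mem_univ i0)]
    congr 1
    · congr 1
      show (Equiv.piEquivPiSubtypeProd p (fun _ : ι => Z)).symm (t, y0) i0 = _
      rw [Equiv.piEquivPiSubtypeProd_symm_apply]
      exact dif_pos (show p i0 from rfl)
    · refine Finset.sum_congr rfl fun i hi => ?_
      have hi' : ¬ p i := Finset.ne_of_mem_erase hi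
      rw [dif_neg hi']
      congr 1
      show (Equiv.piEquivPiSubtypeProd p (fun _ : ι => Z)).symm (t, y0) i = _
      rw [Equiv.piEquivPiSubtypeProd_symm_apply]
      exact dif_neg hi'
  rw [key] at hy0
  set C := ∑ i ∈ Finset.univ.erase i0, (if hi : p i then 0 else h (y0 ⟨i, hi⟩)) with hC
  have h2 := hy0.sub (integrable_const C)
  have h3 : ((fun t : {i // p i} → Z => h (t ⟨i0, rfl⟩) + C) - fun _ => C)
      = fun t : {i // p i} → Z => h (t ⟨i0, rfl⟩) := by
    funext t
    show (h (t ⟨i0, rfl⟩) + C) - C = _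
    ring
  rw [h3] at h2
  exact @integrable_of_integrable_eval Z _ P _ {i // p i} (Subtype.fintype p)
    (Subtype.instDecidableEq) h hh ⟨i0, rfl⟩ h2

lemma aux_integral_sum {P : Measure Z} [IsProbabilityMeasure P]
    {ι : Type*} [Fintype ι] [DecidableEq ι] {h : Z → ℝ} (hh : Measurable h) (hint : Integrable h P) :
    ∫ y : ι → Z, ∑ i, h (y i) ∂(Measure.pi fun _ => P)
      = (Fintype.card ι : ℝ) * ∫ z, h z ∂P := by
  have hmap : ∀ i : ι, Measure.map (Function.eval i) (Measure.pi fun _ : ι => P) = P :=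
    map_eval_pi' P
  have hInt : ∀ i : ι, Integrable (fun y : ι → Z => h (y i)) (Measure.pi fun _ => P) := by
    intro i
    exact (integrable_map_measure (by rw [hmap i]; exact hh.aestronglyMeasurable)
      (measurable_pi_apply i).aemeasurable).mp (by rw [hmap i]; exact hint)
  rw [integral_finset_sum _ (fun i _ => hInt i)]
  have hval : ∀ i : ι, ∫ y : ι → Z, h (y i) ∂(Measure.pi fun _ => P) = ∫ z, h z ∂P := by
    intro i
    have := integral_map (μ := Measure.pi fun _ : ι => P) (measurable_pi_apply i).aemeasurable
      (f := h) (by rw [hmap i]; exact hh.aestronglyMeasurable)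
    rw [hmap i] at this
    exact this.symm
  simp_rw [hval]
  rw [Finset.sum_const, Finset.card_univ, nsmul_eq_mul]

end auxlemmas


noncomputable section

variable {𝒳 𝒴 : Type*}

/-- The predictor obtained by training the learning rule `fhat` on the subsample of `d`
indexed by `s` (listed in increasing order of indices). -/
def trained (fhat : (k : ℕ) → (Fin k → 𝒳 × 𝒴) → 𝒳 → 𝒴) {n : ℕ}
    (s : Finset (Fin n)) (d : Fin n → 𝒳 × 𝒴) : 𝒳 → 𝒴 :=
  fhat s.card (fun j => d ↑(s.orderIsoOfFin rfl j))

/-- Empirical risk of the predictor `f`, for the cost `c`, on the subsample of `d`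
indexed by `A`. -/
def empOn (c : 𝒴 → 𝒴 → ℝ) {n : ℕ} (A : Finset (Fin n)) (f : 𝒳 → 𝒴)
    (d : Fin n → 𝒳 × 𝒴) : ℝ :=
  (A.card : ℝ)⁻¹ * ∑ i ∈ A, c (f (d i).1) (d i).2

/-- Hold-out (simple validation) estimator: train on the subsample indexed by `s`,
validate on the complementary subsample. -/
def holdout (c : 𝒴 → 𝒴 → ℝ) (fhat : (k : ℕ) → (Fin k → 𝒳 × 𝒴) → 𝒳 → 𝒴) {n : ℕ}
    (s : Finset (Fin n)) (d : Fin n → 𝒳 × 𝒴) : ℝ :=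
  empOn c sᶜ (trained fhat s d) d

variable [MeasurableSpace 𝒳] [MeasurableSpace 𝒴]

/-- Risk of a predictor `f` under the data distribution `P`, for the cost `c`. -/
def risk (P : Measure (𝒳 × 𝒴)) (c : 𝒴 → 𝒴 → ℝ) (f : 𝒳 → 𝒴) : ℝ :=
  ∫ z, c (f z.1) z.2 ∂P

/-- Mean risk of the rule `fhat` trained on an i.i.d. sample of size `k` with law `P`. -/
def meanRisk (P : Measure (𝒳 × 𝒴)) [IsProbabilityMeasure P] (c : 𝒴 → 𝒴 → ℝ)
    (fhat : (k : ℕ) → (Fin k → 𝒳 × 𝒴) → 𝒳 → 𝒴) (k : ℕ) : ℝ :=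
  ∫ d : Fin k → 𝒳 × 𝒴, risk P c (fhat k d) ∂(Measure.pi fun _ => P)

end

section holdoutint

variable {𝒳 𝒴 : Type*} [MeasurableSpace 𝒳] [MeasurableSpace 𝒴]

lemma measurable_holdout (c : 𝒴 → 𝒴 → ℝ) (fhat : (k : ℕ) → (Fin k → 𝒳 × 𝒴) → 𝒳 → 𝒴)
    (hc : ∀ k, Measurable (fun q : (Fin k → 𝒳 × 𝒴) × (𝒳 × 𝒴) => c (fhat k q.1 q.2.1) q.2.2))
    {n : ℕ} (s : Finset (Fin n)) :
    Measurable (fun d : Fin n → 𝒳 × 𝒴 => holdout c fhat s d) := by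
  unfold holdout empOn trained
  apply Measurable.const_mul
  apply Finset.measurable_sum
  intro i _
  have hpair : Measurable (fun d : Fin n → 𝒳 × 𝒴 =>
      ((fun j => d ↑(s.orderIsoOfFin rfl j), d i) : (Fin s.card → 𝒳 × 𝒴) × (𝒳 × 𝒴))) :=
    (measurable_pi_lambda _ (fun j => measurable_pi_apply _)).prodMk (measurable_pi_apply i)
  exact (hc s.card).comp hpair

lemma holdout_int (P : Measure (𝒳 × 𝒴)) [IsProbabilityMeasure P] (c : 𝒴 → 𝒴 → ℝ)
    (fhat : (k : ℕ) → (Fin k → 𝒳 × 𝒴) → 𝒳 → 𝒴)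
    (hc : ∀ k, Measurable (fun q : (Fin k → 𝒳 × 𝒴) × (𝒳 × 𝒴) => c (fhat k q.1 q.2.1) q.2.2))
    {n : ℕ} (s : Finset (Fin n)) (hslt : s.card < n)
    (hint : Integrable (fun d => holdout c fhat s d) (Measure.pi fun _ : Fin n => P)) :
    ∫ d, holdout c fhat s d ∂(Measure.pi fun _ : Fin n => P) = meanRisk P c fhat s.card := by
  set p : Fin n → Prop := fun i => i ∈ s with hpdef
  letI idp : DecidablePred p := fun i => inferInstanceAs (Decidable (i ∈ s))
  letI if1 : Fintype (Subtype p) := Subtype.fintype p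
  letI if2 : Fintype {i // ¬ p i} := Subtype.fintype _
  set e := MeasurableEquiv.piEquivPiSubtypeProd (fun _ : Fin n => 𝒳 × 𝒴) p with he
  have mp := measurePreserving_piEquivPiSubtypeProd (fun _ : Fin n => P) p
  set G : ({i // p i} → 𝒳 × 𝒴) → 𝒳 → 𝒴 :=
    fun t => fhat s.card (fun j => t (s.orderIsoOfFin rfl j)) with hG
  set H : (({i // p i} → 𝒳 × 𝒴) × ({i // ¬ p i} → 𝒳 × 𝒴)) → ℝ :=
    fun q => ((sᶜ.card : ℝ))⁻¹ * ∑ i : {i // ¬ p i}, c (G q.1 (q.2 i).1) (q.2 i).2 with hH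
  have hHe : ∀ d, H (e d) = holdout c fhat s d := by
    intro d
    have he1 : e d = (fun i : {i // p i} => d i, fun i : {i // ¬ p i} => d i) := rfl
    simp only [hH, he1]
    unfold holdout empOn
    rw [Finset.sum_subtype sᶜ (fun x => Finset.mem_compl) fun i =>
      c (trained fhat s d (d i).1) (d i).2]
    rfl
  have hH2 : Integrable H ((Measure.pi fun _ : {i // p i} => P).prod
      (Measure.pi fun _ : {i // ¬ p i} => P)) := by
    refine (mp.integrable_comp_emb e.measurableEmbedding).mp ?_
    exact (integrable_congr (Filter.Eventually.of_forall fun d => (hHe d))).mpr hint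
  have h1 : ∫ d, holdout c fhat s d ∂(Measure.pi fun _ : Fin n => P)
      = ∫ x, H (e x) ∂(Measure.pi fun _ : Fin n => P) :=
    MeasureTheory.integral_congr_ae (Filter.Eventually.of_forall fun d => (hHe d).symm)
  have h2 := mp.integral_comp e.measurableEmbedding H
  have h3 := MeasureTheory.integral_prod H hH2
  have h123 := h1.trans (h2.trans h3)
  have hm0 : sᶜ.card = n - s.card := by simp [Finset.card_compl]
  have hmpos : 0 < sᶜ.card := by omega
  have hcard : (Fintype.card {i // ¬ p i} : ℕ) = sᶜ.card := by
    rw [Fintype.card_subtype]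
    congr 1
    ext i
    simp [hpdef]
  obtain ⟨i0m, hi0m⟩ := Finset.card_pos.mp hmpos
  have hi0p : ¬ p i0m := by simpa [hpdef] using hi0m
  have hmne : ((sᶜ.card : ℝ)) ≠ 0 := Nat.cast_ne_zero.mpr hmpos.ne'
  have hae : ∀ᵐ t ∂(Measure.pi fun _ : {i // p i} => P),
      (∫ y, H (t, y) ∂(Measure.pi fun _ : {i // ¬ p i} => P)) = risk P c (G t) := by
    filter_upwards [hH2.prod_right_ae] with t ht
    simp only [hH]
    have hmeas_h : Measurable (fun z : 𝒳 × 𝒴 => c (G t z.1) z.2) :=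
      (hc s.card).comp (measurable_const.prodMk measurable_id)
    have hsum_int : Integrable
        (fun y : {i // ¬ p i} → 𝒳 × 𝒴 => ∑ i, c (G t (y i).1) (y i).2)
        (Measure.pi fun _ : {i // ¬ p i} => P) := by
      have := (integrable_const_mul_iff (isUnit_iff_ne_zero.mpr (inv_ne_zero hmne))
        (fun y : {i // ¬ p i} → 𝒳 × 𝒴 => ∑ i, c (G t (y i).1) (y i).2)).mp ht
      exact this
    have hint_h : Integrable (fun z : 𝒳 × 𝒴 => c (G t z.1) z.2) P :=
      aux_int_of_sum (⟨i0m, hi0p⟩ : {i // ¬ p i}) hmeas_h hsum_int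
    calc ∫ y, H (t, y) ∂(Measure.pi fun _ : {i // ¬ p i} => P)
        = ((sᶜ.card : ℝ))⁻¹ * ∫ y, (∑ i, c (G t (y i).1) (y i).2)
            ∂(Measure.pi fun _ : {i // ¬ p i} => P) := integral_const_mul _ _
      _ = ((sᶜ.card : ℝ))⁻¹ * ((Fintype.card {i // ¬ p i} : ℝ)
            * ∫ z, c (G t z.1) z.2 ∂P) := by rw [aux_integral_sum hmeas_h hint_h]
      _ = risk P c (G t) := by
            rw [hcard]
            unfold risk
            field_simp
  have h4 := MeasureTheory.integral_congr_ae hae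
  set f : Fin s.card ≃ {i // p i} := (s.orderIsoOfFin rfl).toEquiv with hf
  have mp2 := measurePreserving_piCongrLeft (fun _ : {i // p i} => P) f
  have h5 := (mp2.integral_comp
    (MeasurableEquiv.piCongrLeft (fun _ : {i // p i} => 𝒳 × 𝒴) f).measurableEmbedding
    (fun t => risk P c (G t))).symm
  have h6 : ∫ u : Fin s.card → 𝒳 × 𝒴,
      risk P c (G ((MeasurableEquiv.piCongrLeft (fun _ : {i // p i} => 𝒳 × 𝒴) f) u))
        ∂(Measure.pi fun _ => P) = meanRisk P c fhat s.card := by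
    unfold meanRisk
    refine MeasureTheory.integral_congr_ae (Filter.Eventually.of_forall fun u => ?_)
    have harg : (fun j => (MeasurableEquiv.piCongrLeft (fun _ : {i // p i} => 𝒳 × 𝒴) f) u
        (s.orderIsoOfFin rfl j)) = u := by
      funext j
      exact MeasurableEquiv.piCongrLeft_apply_apply (β := fun _ : {i // p i} => 𝒳 × 𝒴) f u j
    show risk P c (fhat s.card _) = _
    rw [harg]
  exact h123.trans (h4.trans (h5.trans h6))

end holdoutint


instance {α : Type*} : MeasurableSpace (Finset α) := ⊤

instance {α : Type*} : MeasurableSingletonClass (Finset α) :=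
  ⟨fun _ => MeasurableSpace.measurableSet_top⟩

attribute [local irreducible] holdout empOn trained in
lemma measurable_holdout_pair {𝒳 𝒴 : Type*} [MeasurableSpace 𝒳] [MeasurableSpace 𝒴]
    (c : 𝒴 → 𝒴 → ℝ) (fhat : (k : ℕ) → (Fin k → 𝒳 × 𝒴) → 𝒳 → 𝒴)
    (hc : ∀ k, Measurable (fun q : (Fin k → 𝒳 × 𝒴) × (𝒳 × 𝒴) => c (fhat k q.1 q.2.1) q.2.2))
    {n : ℕ} :
    Measurable (fun q : Finset (Fin n) × (Fin n → 𝒳 × 𝒴) => holdout c fhat q.1 q.2) := by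
  have hsw : Measurable (fun q : (Fin n → 𝒳 × 𝒴) × Finset (Fin n) =>
      holdout c fhat q.2 q.1) :=
    measurable_from_prod_countable_left (fun s => measurable_holdout c fhat hc s)
  exact hsw.comp measurable_swap



open MeasureTheory ProbabilityTheory Finset in
/-- Overpenalization by cross-validation: assume `E[R_P(f̂(D_k))] = α + β/k` and that the
expected ideal penalty satisfies `E[R_P(f̂(D_k)) − R̂_k(f̂(D_k))] = 2β/k` for all `k ≥ 1`
(γ = 2β). Then the expected cross-validation penalty
`E[R̂^vc − R̂_n(f̂(D_n))]` equals `(β/n)(1 + n/n_e)`, i.e. cross-validation overpenalizes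
relative to the ideal expected penalty `2β/n` by the factor `(1/2)(1 + n/n_e) > 1`. -/
theorem stmt15 {𝒳 𝒴 Ω : Type*} [MeasurableSpace 𝒳] [MeasurableSpace 𝒴]
    [MeasureSpace Ω] [IsProbabilityMeasure (ℙ : Measure Ω)]
    (P : Measure (𝒳 × 𝒴)) [IsProbabilityMeasure P]
    (c : 𝒴 → 𝒴 → ℝ)
    (fhat : (k : ℕ) → (Fin k → 𝒳 × 𝒴) → 𝒳 → 𝒴)
    (hc : ∀ k, Measurable (fun q : (Fin k → 𝒳 × 𝒴) × (𝒳 × 𝒴) => c (fhat k q.1 q.2.1) q.2.2))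
    {n n_e V : ℕ} (hV : 1 ≤ V) (hne : 1 ≤ n_e) (hn : n_e < n)
    (D : Ω → Fin n → 𝒳 × 𝒴) (hD : Measurable D)
    (hlaw : Measure.map D ℙ = Measure.pi fun _ => P)
    (Eset : Fin V → Ω → Finset (Fin n)) (hEmeas : ∀ j, Measurable (Eset j))
    (hEcard : ∀ j ω, (Eset j ω).card = n_e)
    (hindep : IndepFun (fun ω j => Eset j ω) D ℙ)
    (hint : ∀ j, Integrable (fun ω => holdout c fhat (Eset j ω) (D ω)) ℙ)
    (hint2 : Integrable (fun ω => empOn c Finset.univ (fhat n (D ω)) (D ω)) ℙ)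
    (hint3 : ∀ k, Integrable (fun d : Fin k → 𝒳 × 𝒴 => risk P c (fhat k d))
      (Measure.pi fun _ => P))
    (α β : ℝ) (hβ : 0 < β)
    (hexp : ∀ k : ℕ, 1 ≤ k → meanRisk P c fhat k = α + β / k)
    (hpen : ∀ k : ℕ, 1 ≤ k →
      (∫ d : Fin k → 𝒳 × 𝒴, (risk P c (fhat k d) - empOn c Finset.univ (fhat k d) d)
        ∂(Measure.pi fun _ => P)) = 2 * β / k) :
    (∫ ω, ((V : ℝ)⁻¹ * ∑ j, holdout c fhat (Eset j ω) (D ω)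
          - empOn c Finset.univ (fhat n (D ω)) (D ω)) ∂ℙ)
        = (β / n) * (1 + (n : ℝ) / n_e)
    ∧ (β / n) * (1 + (n : ℝ) / n_e)
        = ((1 / 2) * (1 + (n : ℝ) / n_e)) * (2 * β / n)
    ∧ 1 < (1 / 2) * (1 + (n : ℝ) / n_e) := by
  have hn1 : (1 : ℕ) ≤ n := le_trans hne (le_of_lt hn)
  have hnR : (n : ℝ) ≠ 0 := Nat.cast_ne_zero.mpr (by omega)
  have hneR : (n_e : ℝ) ≠ 0 := Nat.cast_ne_zero.mpr (by omega)
  have hVR : (V : ℝ) ≠ 0 := Nat.cast_ne_zero.mpr (by omega)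
  -- Expectation of each hold-out estimator
  have hEj : ∀ j, ∫ ω, holdout c fhat (Eset j ω) (D ω) ∂ℙ = α + β / n_e := by
    intro j
    have hDF := measurable_holdout_pair c fhat hc (n := n)
    have hpair : Measurable (fun ω => (Eset j ω, D ω)) := (hEmeas j).prodMk hD
    have hindj : IndepFun (Eset j) D ℙ :=
      hindep.comp (φ := fun g : Fin V → Finset (Fin n) => g j) (measurable_pi_apply j)
        measurable_id
    have hprod : Measure.map (fun ω => (Eset j ω, D ω)) ℙ
        = (Measure.map (Eset j) ℙ).prod (Measure.pi fun _ => P) := by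
      rw [← hlaw]
      exact (indepFun_iff_map_prod_eq_prod_map_map (hEmeas j).aemeasurable
        hD.aemeasurable).mp hindj
    haveI : IsProbabilityMeasure (Measure.map (Eset j) ℙ) :=
      Measure.isProbabilityMeasure_map (hEmeas j).aemeasurable
    have h2 := (integrable_map_measure hDF.aestronglyMeasurable hpair.aemeasurable).mpr (hint j)
    rw [hprod] at h2
    have h1 := integral_map (μ := ℙ) hpair.aemeasurable hDF.aestronglyMeasurable
    rw [hprod] at h1
    have hae1 : ∀ᵐ s ∂(Measure.map (Eset j) ℙ), s.card = n_e := by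
      rw [MeasureTheory.ae_map_iff (hEmeas j).aemeasurable
        (MeasurableSpace.measurableSet_top (s := {t : Finset (Fin n) | t.card = n_e}))]
      exact Filter.Eventually.of_forall (hEcard j)
    have hae : ∀ᵐ s ∂(Measure.map (Eset j) ℙ),
        (∫ d, holdout c fhat s d ∂(Measure.pi fun _ : Fin n => P)) = α + β / n_e := by
      filter_upwards [hae1, h2.prod_right_ae] with s hs hsint
      rw [holdout_int P c fhat hc s (by omega) hsint, hs, hexp n_e hne]
    refine Eq.trans (h1.symm.trans (MeasureTheory.integral_prod _ h2)) ?_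
    refine Eq.trans (MeasureTheory.integral_congr_ae hae) ?_
    simp
  -- Expectation of the full-sample empirical risk
  have hgmeas : Measurable (fun d : Fin n → 𝒳 × 𝒴 => empOn c Finset.univ (fhat n d) d) := by
    unfold empOn
    apply Measurable.const_mul
    apply Finset.measurable_sum
    intro i _
    have hpair : Measurable (fun d : Fin n → 𝒳 × 𝒴 =>
        ((d, d i) : (Fin n → 𝒳 × 𝒴) × (𝒳 × 𝒴))) :=
      measurable_id.prodMk (measurable_pi_apply i)
    exact (hc n).comp hpair
  have hEmp : ∫ ω, empOn c Finset.univ (fhat n (D ω)) (D ω) ∂ℙ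
      = α + β / n - 2 * β / n := by
    have hIg : Integrable (fun d : Fin n → 𝒳 × 𝒴 => empOn c Finset.univ (fhat n d) d)
        (Measure.pi fun _ => P) := by
      have := (integrable_map_measure hgmeas.aestronglyMeasurable hD.aemeasurable).mpr hint2
      rwa [hlaw] at this
    have h1 : ∫ ω, empOn c Finset.univ (fhat n (D ω)) (D ω) ∂ℙ
        = ∫ d, empOn c Finset.univ (fhat n d) d ∂(Measure.pi fun _ : Fin n => P) := by
      rw [← hlaw]
      exact (integral_map hD.aemeasurable hgmeas.aestronglyMeasurable).symm
    have hsub := hpen n hn1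
    rw [MeasureTheory.integral_sub (hint3 n) hIg] at hsub
    have hm : (∫ d : Fin n → 𝒳 × 𝒴, risk P c (fhat n d) ∂(Measure.pi fun _ => P))
        = α + β / n := hexp n hn1
    rw [h1]
    linarith
  -- Assemble
  have hsum_int : Integrable (fun ω => (V : ℝ)⁻¹ * ∑ j, holdout c fhat (Eset j ω) (D ω)) ℙ :=
    (integrable_finset_sum Finset.univ (fun j _ => hint j)).const_mul _
  have hmain : (∫ ω, ((V : ℝ)⁻¹ * ∑ j, holdout c fhat (Eset j ω) (D ω)
        - empOn c Finset.univ (fhat n (D ω)) (D ω)) ∂ℙ)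
      = (β / n) * (1 + (n : ℝ) / n_e) := by
    rw [MeasureTheory.integral_sub hsum_int hint2, hEmp]
    rw [MeasureTheory.integral_const_mul]
    rw [MeasureTheory.integral_finset_sum Finset.univ (fun j _ => hint j)]
    have : ∑ j : Fin V, ∫ ω, holdout c fhat (Eset j ω) (D ω) ∂ℙ
        = (V : ℝ) * (α + β / n_e) := by
      rw [Finset.sum_congr rfl (fun j _ => hEj j), Finset.sum_const, Finset.card_univ,
        Fintype.card_fin, nsmul_eq_mul]
    rw [this]
    field_simp
    ring
  refine ⟨hmain, by field_simp, ?_⟩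
  have h1 : (1 : ℝ) < (n : ℝ) / n_e := by
    rw [one_lt_div (by positivity)]
    exact_mod_cast hn
  linarith
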